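/- Let σ > 0, m > 0 and let φ : [0,T) → ℓ²(ℤ^N) be a twice continuously differentiable solution of the conservative DKG equation φ̈ − Δ_d φ + m φ − F(φ) = 0 with initial data φ(0) = φ₀, φ̇(0) = φ₁ satisfying H(0) ≤ 0 and (φ₀, φ₁)_{ℓ²} > 0. Then the solution cannot exist globally: necessarily T ≤ T* where T* = ‖φ₀‖²_{ℓ²} / (σ (φ₀, φ₁)_{ℓ²}); that is, ‖φ(t)‖²_{ℓ²} becomes unbounded on the finite interval (0, T*). -/

import Mathlib

noncomputable section

open scoped ENNReal InnerProductSpace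

/-- The lattice `ℤ^N`. -/
abbrev ZLat (N : ℕ) := Fin N → ℤ

/-- The space `ℓ²(ℤ^N)` of real square-summable sequences. -/
abbrev ellTwo (N : ℕ) := lp (fun _ : ZLat N => ℝ) 2

/-- The `κ`-th standard basis vector of `ℤ^N`. -/
def evec (N : ℕ) (κ : Fin N) : ZLat N := fun j => if j = κ then 1 else 0

lemma memℓp_shift {N : ℕ} (v : ZLat N) (φ : ellTwo N) :
    Memℓp (fun n => φ (n + v)) 2 := by
  have h2 : (0:ℝ) < (2 : ℝ≥0∞).toReal := by norm_num
  rw [memℓp_gen_iff h2]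
  have h := (memℓp_gen_iff h2).mp (lp.memℓp φ)
  exact ((Equiv.addRight v).summable_iff (f := fun n => ‖φ n‖ ^ (2:ℝ≥0∞).toReal)).2 h

/-- The shift operator `(S_v φ)_n = φ_{n+v}` on `ℓ²(ℤ^N)`. -/
def shiftOp {N : ℕ} (v : ZLat N) (φ : ellTwo N) : ellTwo N :=
  ⟨fun n => φ (n + v), memℓp_shift v φ⟩

/-- The forward difference operator `(∇⁺_κ φ)_n = φ_{n+e_κ} - φ_n`. -/
def fdiff {N : ℕ} (κ : Fin N) (φ : ellTwo N) : ellTwo N := shiftOp (evec N κ) φ - φ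

/-- The discrete Laplacian on `ℓ²(ℤ^N)`:
`(Δ_d φ)_n = Σ_κ (φ_{n+e_κ} + φ_{n-e_κ}) - 2N φ_n`. -/
def discLap {N : ℕ} (φ : ellTwo N) : ellTwo N :=
  (∑ κ : Fin N, (shiftOp (evec N κ) φ + shiftOp (-(evec N κ)) φ)) - ((2 * N : ℝ) • φ)

lemma memℓp_F {N : ℕ} (σ : ℝ) (hσ : 0 ≤ σ) (φ : ellTwo N) :
    Memℓp (fun n => |φ n| ^ (2 * σ) * φ n) 2 := by
  have h2 : (0:ℝ) < (2 : ℝ≥0∞).toReal := by norm_num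
  rw [memℓp_gen_iff h2]
  have hφ := (memℓp_gen_iff h2).mp (lp.memℓp φ)
  refine Summable.of_nonneg_of_le (fun n => Real.rpow_nonneg (norm_nonneg _) _)
    (f := fun n => (‖φ‖ ^ (2*σ)) ^ (2:ℝ≥0∞).toReal * ‖φ n‖ ^ (2:ℝ≥0∞).toReal) ?_ ?_
  · intro n
    have h1 : |φ n| ≤ ‖φ‖ := by
      simpa [Real.norm_eq_abs] using lp.norm_apply_le_norm (p := 2) (by norm_num) φ n
    have h0 : (0:ℝ) ≤ |φ n| := abs_nonneg _
    have hC : |φ n| ^ (2*σ) ≤ ‖φ‖ ^ (2*σ) := Real.rpow_le_rpow h0 h1 (by positivity)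
    have hb : ‖|φ n| ^ (2*σ) * φ n‖ ≤ ‖φ‖ ^ (2*σ) * ‖φ n‖ := by
      rw [norm_mul, Real.norm_eq_abs, abs_of_nonneg (Real.rpow_nonneg h0 _)]
      exact mul_le_mul_of_nonneg_right hC (norm_nonneg _)
    calc ‖|φ n| ^ (2*σ) * φ n‖ ^ (2:ℝ≥0∞).toReal
        ≤ (‖φ‖ ^ (2*σ) * ‖φ n‖) ^ (2:ℝ≥0∞).toReal :=
          Real.rpow_le_rpow (norm_nonneg _) hb (by norm_num)
      _ = (‖φ‖ ^ (2*σ)) ^ (2:ℝ≥0∞).toReal * ‖φ n‖ ^ (2:ℝ≥0∞).toReal :=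
          Real.mul_rpow (Real.rpow_nonneg (norm_nonneg _) _) (norm_nonneg _)
  · exact hφ.mul_left _

/-- The power-law nonlinearity `(F(φ))_n = |φ_n|^{2σ} φ_n` as a map on `ℓ²(ℤ^N)`. -/
def Fpow {N : ℕ} (σ : ℝ) (hσ : 0 ≤ σ) (φ : ellTwo N) : ellTwo N :=
  ⟨fun n => |φ n| ^ (2 * σ) * φ n, memℓp_F σ hσ φ⟩

/-- The Hamiltonian (total energy)
`H(t) = ½‖φ̇(t)‖² + ½(Σ_κ ‖∇⁺_κ φ(t)‖² + m‖φ(t)‖²) - (1/(2σ+2)) Σ_n |φ_n(t)|^{2σ+2}`. -/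
def energyH {N : ℕ} (σ m : ℝ) (φ φ' : ℝ → ellTwo N) (t : ℝ) : ℝ :=
  1/2 * ‖φ' t‖ ^ 2
    + 1/2 * (∑ κ : Fin N, ‖fdiff κ (φ t)‖ ^ 2 + m * ‖φ t‖ ^ 2)
    - (1/(2*σ+2)) * ∑' n : ZLat N, |(φ t) n| ^ (2*σ+2)

/-!
Levine's concavity argument. The energy `H` is conserved along solutions, so `H ≤ 0` for all
times. Pairing the equation with `φ` and using `H ≤ 0` gives `⟪φ, φ̈⟫ ≥ (σ + 1) ‖φ̇‖²`, and with
Cauchy–Schwarz the function `y = ‖φ‖²` satisfies `y y'' ≥ (1 + σ/2) y'²`. Hence `y ^ (-σ/2)` is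
positive and concave on `[0, T)`, so it lies below its tangent line at `0`, which vanishes at `T*`.
-/

open Filter Topology Asymptotics

section Monotone

variable {f f' : ℝ → ℝ} {s : Set ℝ}

lemma Convex.monotoneOn_of_hasDerivWithinAt_nonneg (hs : Convex ℝ s)
    (hf : ∀ x ∈ s, HasDerivWithinAt f (f' x) s x) (hf' : ∀ x ∈ s, 0 ≤ f' x) :
    MonotoneOn f s :=
  _root_.monotoneOn_of_hasDerivWithinAt_nonneg hs (fun x hx => (hf x hx).continuousWithinAt)
    (fun x hx => (hf x (interior_subset hx)).mono interior_subset)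
    (fun x hx => hf' x (interior_subset hx))

lemma Convex.antitoneOn_of_hasDerivWithinAt_nonpos (hs : Convex ℝ s)
    (hf : ∀ x ∈ s, HasDerivWithinAt f (f' x) s x) (hf' : ∀ x ∈ s, f' x ≤ 0) :
    AntitoneOn f s :=
  _root_.antitoneOn_of_hasDerivWithinAt_nonpos hs (fun x hx => (hf x hx).continuousWithinAt)
    (fun x hx => (hf x (interior_subset hx)).mono interior_subset)
    (fun x hx => hf' x (interior_subset hx))

lemma Convex.le_add_mul_sub_of_antitoneOn_deriv (hs : Convex ℝ s)
    (hf : ∀ x ∈ s, HasDerivWithinAt f (f' x) s x) (hf' : AntitoneOn f' s)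
    {a b : ℝ} (ha : a ∈ s) (hb : b ∈ s) (hab : a ≤ b) :
    f b ≤ f a + f' a * (b - a) := by
  have hg : AntitoneOn (fun x => f x - f' a * x) (s ∩ Set.Ici a) := by
    refine (hs.inter (convex_Ici a)).antitoneOn_of_hasDerivWithinAt_nonpos
      (f' := fun x => f' x - f' a) (fun x hx => ?_) (fun x hx => ?_)
    · simpa using ((hf x hx.1).mono Set.inter_subset_left).fun_sub
        ((hasDerivWithinAt_id x _).const_mul (f' a))
    · exact sub_nonpos.2 (hf' ha hx.1 hx.2)
  have := hg ⟨ha, Set.mem_Ici.2 le_rfl⟩ ⟨hb, hab⟩ hab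
  linarith

end Monotone

theorem le_div_of_levine_concavity {y y' y'' : ℝ → ℝ} {T α : ℝ} (hα : 0 < α)
    (hy : ∀ t ∈ Set.Ico 0 T, HasDerivWithinAt y (y' t) (Set.Ico 0 T) t)
    (hy' : ∀ t ∈ Set.Ico 0 T, HasDerivWithinAt y' (y'' t) (Set.Ico 0 T) t)
    (hy''_nonneg : ∀ t ∈ Set.Ico 0 T, 0 ≤ y'' t)
    (hconcave : ∀ t ∈ Set.Ico 0 T, (1 + α) * y' t ^ 2 ≤ y t * y'' t)
    (hy0 : 0 < y 0) (hy'0 : 0 < y' 0) :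
    T ≤ y 0 / (α * y' 0) := by
  set s := Set.Ico (0 : ℝ) T
  have hs : Convex ℝ s := convex_Ico 0 T
  by_contra! hT
  set Tstar := y 0 / (α * y' 0)
  have hTstar : Tstar ∈ s := ⟨by positivity, hT⟩
  have h0 : (0 : ℝ) ∈ s := ⟨le_rfl, hTstar.1.trans_lt hT⟩
  have hy'_pos : ∀ t ∈ s, 0 < y' t := fun t ht =>
    hy'0.trans_le (hs.monotoneOn_of_hasDerivWithinAt_nonneg hy' hy''_nonneg h0 ht ht.1)
  have hy_pos : ∀ t ∈ s, 0 < y t := fun t ht =>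
    hy0.trans_le (hs.monotoneOn_of_hasDerivWithinAt_nonneg hy (fun t ht => (hy'_pos t ht).le)
      h0 ht ht.1)
  set z' : ℝ → ℝ := fun t => -α * y t ^ (-α - 1) * y' t
  have hz : ∀ t ∈ s, HasDerivWithinAt (fun t => y t ^ (-α)) (z' t) s t := fun t ht =>
    ((hy t ht).rpow_const (p := -α) (Or.inl (hy_pos t ht).ne')).congr_deriv (by ring)
  have hz' : ∀ t ∈ s, HasDerivWithinAt z'
      (α * y t ^ (-α - 2) * ((1 + α) * y' t ^ 2 - y t * y'' t)) s t := by
    intro t ht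
    refine ((((hy t ht).rpow_const (p := -α - 1) (Or.inl (hy_pos t ht).ne')).const_mul
      (-α)).mul (hy' t ht)).congr_deriv ?_
    rw [show -α - 1 - 1 = -α - 2 by ring, show -α - 1 = -α - 2 + 1 by ring,
      Real.rpow_add_one (hy_pos t ht).ne']
    ring
  have hz'_anti : AntitoneOn z' s := hs.antitoneOn_of_hasDerivWithinAt_nonpos hz' fun t ht =>
    mul_nonpos_of_nonneg_of_nonpos (by have := hy_pos t ht; positivity)
      (sub_nonpos.2 (hconcave t ht))
  have htangent := hs.le_add_mul_sub_of_antitoneOn_deriv hz hz'_anti h0 hTstar hTstar.1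
  have htangent_zero : y 0 ^ (-α) + z' 0 * (Tstar - 0) = 0 := by
    simp only [z', Tstar, sub_zero]
    rw [show -α = -α - 1 + 1 by ring, Real.rpow_add_one hy0.ne',
      show -α - 1 + 1 - 1 = -α - 1 by ring]
    field_simp
    ring
  have := Real.rpow_pos_of_pos (hy_pos Tstar hTstar) (-α)
  linarith

section AbsRpow

variable {q : ℝ}

lemma abs_rpow_add_two (hq : q + 2 ≠ 0) (x : ℝ) : |x| ^ (q + 2) = |x| ^ q * x ^ 2 := by
  rw [Real.rpow_add' (abs_nonneg x) hq, Real.rpow_two, sq_abs]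

lemma hasDerivAt_abs_rpow_mul_self (hq : 0 < q) (x : ℝ) :
    HasDerivAt (fun x : ℝ => |x| ^ q * x) ((q + 1) * |x| ^ q) x := by
  rcases eq_or_ne x 0 with rfl | hx
  · have h0 : Tendsto (fun h : ℝ => |h| ^ q) (𝓝 0) (𝓝 0) := by
      simpa [Real.zero_rpow hq.ne'] using
        (continuous_abs.rpow_const fun _ => Or.inr hq.le).tendsto (0 : ℝ)
    rw [hasDerivAt_iff_isLittleO_nhds_zero]
    simpa [Real.zero_rpow hq.ne'] using
      ((isLittleO_one_iff ℝ).2 h0).mul_isBigO (isBigO_refl (fun h : ℝ => h) _)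
  · refine (((hasDerivAt_abs hx).rpow_const (p := q) (Or.inl (abs_ne_zero.2 hx))).mul
      (hasDerivAt_id x)).congr_deriv ?_
    have : |x| ^ (q - 1) * |x| = |x| ^ q := by
      rw [← Real.rpow_add_one (abs_ne_zero.2 hx), sub_add_cancel]
    simp only [id, mul_one]
    rw [← this, ← sign_mul_self x]
    ring

lemma abs_abs_rpow_mul_self_sub_le (hq : 0 < q) {M x y : ℝ} (hx : |x| ≤ M) (hy : |y| ≤ M) :
    |(|x| ^ q * x) - |y| ^ q * y| ≤ (q + 1) * M ^ q * |x - y| := by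
  have hM : 0 ≤ M := (abs_nonneg x).trans hx
  simpa [Real.norm_eq_abs] using (convex_Icc (-M) M).norm_image_sub_le_of_norm_hasDerivWithin_le
    (fun z _ => (hasDerivAt_abs_rpow_mul_self hq z).hasDerivWithinAt)
    (fun z hz => by
      rw [Real.norm_eq_abs, abs_of_nonneg (by positivity)]
      gcongr
      exact abs_le.2 hz)
    (abs_le.1 hy) (abs_le.1 hx)

lemma abs_abs_rpow_add_two_sub_le (hq : 0 < q) (a h : ℝ) :
    |(|a + h| ^ (q + 2) - |a| ^ (q + 2) - (q + 2) * (|a| ^ q * a) * h)|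
      ≤ (q + 2) * (q + 1) * (|a| + |h|) ^ q * h ^ 2 := by
  set M := |a| + |h|
  have hderiv : ∀ x, HasDerivAt (fun x => |x| ^ (q + 2) - (q + 2) * (|a| ^ q * a) * x)
      ((q + 2) * (|x| ^ q * x - |a| ^ q * a)) x := fun x =>
    ((hasDerivAt_abs_rpow x (by linarith)).sub
      ((hasDerivAt_id x).const_mul ((q + 2) * (|a| ^ q * a)))).congr_deriv
        (by simp only [add_sub_cancel_right, mul_one]; ring)
  have hbound : ∀ x ∈ Set.uIcc a (a + h),
      ‖(q + 2) * (|x| ^ q * x - |a| ^ q * a)‖ ≤ (q + 2) * ((q + 1) * M ^ q * |h|) := by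
    intro x hx
    have hxa : |x - a| ≤ |h| := by simpa using Set.abs_sub_left_of_mem_uIcc hx
    have hxM : |x| ≤ M := by
      calc |x| = |a + (x - a)| := by ring_nf
        _ ≤ |a| + |x - a| := abs_add_le _ _
        _ ≤ M := add_le_add_right hxa _
    rw [Real.norm_eq_abs, abs_mul, abs_of_pos (by linarith)]
    refine mul_le_mul_of_nonneg_left ?_ (by linarith)
    exact (abs_abs_rpow_mul_self_sub_le hq hxM (by simp [M])).trans (by gcongr)
  have := (convex_uIcc a (a + h)).norm_image_sub_le_of_norm_hasDerivWithin_le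
    (fun x _ => (hderiv x).hasDerivWithinAt) hbound Set.left_mem_uIcc Set.right_mem_uIcc
  rw [Real.norm_eq_abs, Real.norm_eq_abs, add_sub_cancel_left] at this
  calc _ = |(|a + h| ^ (q + 2) - (q + 2) * (|a| ^ q * a) * (a + h))
        - (|a| ^ (q + 2) - (q + 2) * (|a| ^ q * a) * a)| := by ring_nf
    _ ≤ (q + 2) * ((q + 1) * M ^ q * |h|) * |h| := this
    _ = _ := by rw [← sq_abs h]; ring

end AbsRpow

lemma lp.hasSum_mul {ι : Type*} (f g : lp (fun _ : ι => ℝ) 2) :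
    HasSum (fun i => f i * g i) ⟪f, g⟫_ℝ := by
  simpa [mul_comm] using lp.hasSum_inner (𝕜 := ℝ) f g

lemma summable_abs_rpow_add_two {ι : Type*} {q : ℝ} (hq : 0 ≤ q) (f : lp (fun _ : ι => ℝ) 2) :
    Summable fun i => |f i| ^ (q + 2) := by
  refine ((lp.hasSum_mul f f).summable.mul_left (‖f‖ ^ q)).of_nonneg_of_le
    (fun i => by positivity) fun i => ?_
  rw [abs_rpow_add_two (by positivity), ← sq]
  gcongr
  simpa using lp.norm_apply_le_norm two_ne_zero f i

section Lattice

variable {N : ℕ}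

@[simp]
lemma shiftOp_apply (v : ZLat N) (φ : ellTwo N) (n : ZLat N) : shiftOp v φ n = φ (n + v) := rfl

lemma shiftOp_neg_shiftOp (v : ZLat N) (φ : ellTwo N) : shiftOp (-v) (shiftOp v φ) = φ := by
  ext n
  simp

lemma inner_shiftOp_right (f g : ellTwo N) (v : ZLat N) :
    ⟪f, shiftOp v g⟫_ℝ = ⟪shiftOp (-v) f, g⟫_ℝ := by
  rw [← (lp.hasSum_mul _ _).tsum_eq, ← (lp.hasSum_mul _ _).tsum_eq]
  simpa using (Equiv.addRight v).tsum_eq fun n => f (n + -v) * g n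

lemma norm_shiftOp (v : ZLat N) (f : ellTwo N) : ‖shiftOp v f‖ = ‖f‖ := by
  rw [norm_eq_sqrt_real_inner, norm_eq_sqrt_real_inner, inner_shiftOp_right, shiftOp_neg_shiftOp]

def shiftₗᵢ (v : ZLat N) : ellTwo N →ₗᵢ[ℝ] ellTwo N where
  toFun := shiftOp v
  map_add' _ _ := rfl
  map_smul' _ _ := rfl
  norm_map' := norm_shiftOp v

lemma HasDerivWithinAt.fdiff {φ : ℝ → ellTwo N} {φ' : ellTwo N} {s : Set ℝ} {t : ℝ} (κ : Fin N)
    (hφ : HasDerivWithinAt φ φ' s t) :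
    HasDerivWithinAt (fun u => fdiff κ (φ u)) (fdiff κ φ') s t :=
  ((shiftₗᵢ (evec N κ)).toContinuousLinearMap.hasFDerivAt.comp_hasDerivWithinAt t hφ).sub hφ

lemma inner_fdiff_fdiff (f g : ellTwo N) (κ : Fin N) :
    ⟪fdiff κ f, fdiff κ g⟫_ℝ
      = 2 * ⟪f, g⟫_ℝ - ⟪f, shiftOp (evec N κ) g⟫_ℝ - ⟪f, shiftOp (-evec N κ) g⟫_ℝ := by
  have hSS : ⟪shiftOp (evec N κ) f, shiftOp (evec N κ) g⟫_ℝ = ⟪f, g⟫_ℝ := by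
    rw [inner_shiftOp_right, shiftOp_neg_shiftOp]
  have hSf : ⟪shiftOp (evec N κ) f, g⟫_ℝ = ⟪f, shiftOp (-evec N κ) g⟫_ℝ := by
    rw [real_inner_comm, inner_shiftOp_right, real_inner_comm]
  simp only [fdiff, inner_sub_left, inner_sub_right, hSS, hSf]
  ring

lemma inner_discLap (f g : ellTwo N) :
    ⟪f, discLap g⟫_ℝ = -∑ κ : Fin N, ⟪fdiff κ f, fdiff κ g⟫_ℝ := by
  simp only [discLap, inner_sub_right, inner_sum, inner_add_right, inner_smul_right,
    inner_fdiff_fdiff, Finset.sum_sub_distrib, Finset.sum_add_distrib, Finset.sum_const,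
    Finset.card_univ, Fintype.card_fin, nsmul_eq_mul]
  ring

end Lattice

section Nonlinearity

variable {N : ℕ} {σ : ℝ}

@[simp]
lemma Fpow_apply (hσ : 0 ≤ σ) (f : ellTwo N) (n : ZLat N) :
    Fpow σ hσ f n = |f n| ^ (2 * σ) * f n := rfl

lemma inner_Fpow_self (hσ : 0 ≤ σ) (f : ellTwo N) :
    ⟪Fpow σ hσ f, f⟫_ℝ = ∑' n, |f n| ^ (2 * σ + 2) := by
  rw [← (lp.hasSum_mul _ _).tsum_eq]
  refine tsum_congr fun n => ?_
  rw [Fpow_apply, abs_rpow_add_two (by positivity)]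
  ring

lemma abs_tsum_abs_rpow_sub_sub_inner_le (hσ : 0 < σ) (ψ h : ellTwo N) (hh : ‖h‖ ≤ 1) :
    |∑' n, |(ψ + h) n| ^ (2 * σ + 2) - ∑' n, |ψ n| ^ (2 * σ + 2)
        - (2 * σ + 2) * ⟪Fpow σ hσ.le ψ, h⟫_ℝ|
      ≤ (2 * σ + 2) * (2 * σ + 1) * (‖ψ‖ + 1) ^ (2 * σ) * ‖h‖ ^ 2 := by
  set q := 2 * σ
  have hq : 0 < q := by positivity
  set C := (q + 2) * (q + 1) * (‖ψ‖ + 1) ^ q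
  have hrem := ((summable_abs_rpow_add_two hq.le (ψ + h)).hasSum.sub
    (summable_abs_rpow_add_two hq.le ψ).hasSum).sub
      ((lp.hasSum_mul (Fpow σ hσ.le ψ) h).mul_left (q + 2))
  have hsq : HasSum (fun n => C * (h n * h n)) (C * ‖h‖ ^ 2) := by
    simpa [real_inner_self_eq_norm_sq] using (lp.hasSum_mul h h).mul_left C
  have hpt : ∀ n, |(|(ψ + h) n| ^ (q + 2) - |ψ n| ^ (q + 2)
      - (q + 2) * (Fpow σ hσ.le ψ n * h n))| ≤ C * (h n * h n) := by
    intro n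
    have hM : |ψ n| + |h n| ≤ ‖ψ‖ + 1 := by
      gcongr
      · simpa using lp.norm_apply_le_norm two_ne_zero ψ n
      · simpa using (lp.norm_apply_le_norm two_ne_zero h n).trans hh
    calc _ ≤ (q + 2) * (q + 1) * (|ψ n| + |h n|) ^ q * h n ^ 2 := by
          simpa [mul_assoc] using abs_abs_rpow_add_two_sub_le hq (ψ n) (h n)
      _ ≤ C * (h n * h n) := by rw [← sq]; gcongr; simp only [C]; gcongr
  rw [abs_le]
  constructor
  · simpa using hasSum_le (fun n => neg_le_of_abs_le (hpt n)) hsq.neg hrem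
  · exact hasSum_le (fun n => le_of_abs_le (hpt n)) hrem hsq

theorem hasFDerivAt_tsum_abs_rpow (hσ : 0 < σ) (ψ : ellTwo N) :
    HasFDerivAt (fun φ : ellTwo N => ∑' n, |φ n| ^ (2 * σ + 2))
      ((2 * σ + 2) • innerSL ℝ (Fpow σ hσ.le ψ)) ψ := by
  rw [hasFDerivAt_iff_isLittleO_nhds_zero]
  refine IsBigO.trans_isLittleO (g := fun h : ellTwo N => ‖h‖ ^ 2) ?_
    (by simpa using isLittleO_norm_pow_id (E' := ellTwo N) one_lt_two)
  refine IsBigO.of_bound ((2 * σ + 2) * (2 * σ + 1) * (‖ψ‖ + 1) ^ (2 * σ)) ?_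
  filter_upwards [Metric.closedBall_mem_nhds (0 : ellTwo N) one_pos] with h hh
  simpa using abs_tsum_abs_rpow_sub_sub_inner_le hσ ψ h (mem_closedBall_zero_iff.1 hh)

end Nonlinearity

lemma levine_inequality {E : Type*} [NormedAddCommGroup E] [InnerProductSpace ℝ E] {σ : ℝ}
    (hσ : 0 ≤ σ) {x v a : E} (h : (σ + 1) * ‖v‖ ^ 2 ≤ ⟪x, a⟫_ℝ) :
    (1 + σ / 2) * (2 * ⟪x, v⟫_ℝ) ^ 2 ≤ ‖x‖ ^ 2 * (2 * (⟪x, a⟫_ℝ + ⟪v, v⟫_ℝ)) := by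
  have hcs := real_inner_mul_inner_self_le x v
  rw [real_inner_self_eq_norm_sq, real_inner_self_eq_norm_sq] at hcs
  rw [real_inner_self_eq_norm_sq]
  nlinarith [sq_nonneg ‖x‖, sq_nonneg ‖v‖]

section Energy

variable {N : ℕ} {σ m : ℝ}

lemma inner_eq_of_dkg (hσ : 0 ≤ σ) {ψ ψ'' : ellTwo N}
    (heq : ψ'' - discLap ψ + m • ψ - Fpow σ hσ ψ = 0) (v : ellTwo N) :
    ⟪v, ψ''⟫_ℝ
      = -∑ κ : Fin N, ⟪fdiff κ ψ, fdiff κ v⟫_ℝ - m * ⟪ψ, v⟫_ℝ + ⟪Fpow σ hσ ψ, v⟫_ℝ := by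
  have hψ'' : ψ'' = discLap ψ - m • ψ + Fpow σ hσ ψ := by
    rw [← sub_eq_zero, ← heq]
    abel
  rw [hψ'', inner_add_right, inner_sub_right, real_inner_smul_right, inner_discLap,
    real_inner_comm ψ, real_inner_comm (Fpow σ hσ ψ)]
  simp only [real_inner_comm (fdiff _ ψ)]

variable {φ φ' φ'' : ℝ → ellTwo N} {s : Set ℝ}

lemma hasDerivWithinAt_energyH (hσ : 0 < σ) {t : ℝ} (hφ : HasDerivWithinAt φ (φ' t) s t)
    (hφ' : HasDerivWithinAt φ' (φ'' t) s t)
    (heq : φ'' t - discLap (φ t) + m • φ t - Fpow σ hσ.le (φ t) = 0) :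
    HasDerivWithinAt (energyH σ m φ φ') 0 s t := by
  have hG := ((hasFDerivAt_tsum_abs_rpow hσ (φ t)).comp_hasDerivWithinAt t hφ).const_mul
    (1 / (2 * σ + 2))
  refine (((hφ'.norm_sq.const_mul (1 / 2)).add
    (((HasDerivWithinAt.fun_sum fun κ _ => (hφ.fdiff κ).norm_sq).add
      (hφ.norm_sq.const_mul m)).const_mul (1 / 2))).sub hG).congr_deriv ?_
  simp only [FunLike.coe_smul, Pi.smul_apply, innerSL_apply_apply, smul_eq_mul,
    inner_eq_of_dkg hσ.le heq, ← Finset.mul_sum]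
  field_simp
  ring

lemma energyH_eq_of_dkg (hσ : 0 < σ) (hs : Convex ℝ s)
    (hφ : ∀ t ∈ s, HasDerivWithinAt φ (φ' t) s t) (hφ' : ∀ t ∈ s, HasDerivWithinAt φ' (φ'' t) s t)
    (heq : ∀ t ∈ s, φ'' t - discLap (φ t) + m • φ t - Fpow σ hσ.le (φ t) = 0)
    {a b : ℝ} (ha : a ∈ s) (hb : b ∈ s) :
    energyH σ m φ φ' b = energyH σ m φ φ' a := by
  have := hs.norm_image_sub_le_of_norm_hasDerivWithin_le (C := 0)
    (fun t ht => hasDerivWithinAt_energyH hσ (hφ t ht) (hφ' t ht) (heq t ht))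
    (fun _ _ => norm_zero.le) ha hb
  rwa [zero_mul, norm_le_zero_iff, sub_eq_zero] at this

lemma mul_norm_sq_le_inner_of_energyH_nonpos (hσ : 0 ≤ σ) (hm : 0 ≤ m) {t : ℝ}
    (hH : energyH σ m φ φ' t ≤ 0)
    (heq : φ'' t - discLap (φ t) + m • φ t - Fpow σ hσ (φ t) = 0) :
    (σ + 1) * ‖φ' t‖ ^ 2 ≤ ⟪φ t, φ'' t⟫_ℝ := by
  rw [inner_eq_of_dkg hσ heq, inner_Fpow_self, real_inner_self_eq_norm_sq]
  simp only [real_inner_self_eq_norm_sq]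
  unfold energyH at hH
  have hK : 0 ≤ ∑ κ : Fin N, ‖fdiff κ (φ t)‖ ^ 2 := by positivity
  have hmφ : 0 ≤ m * ‖φ t‖ ^ 2 := by positivity
  have h2σ : 0 < 2 * σ + 2 := by linarith
  have hcancel : (2 * σ + 2) * (1 / (2 * σ + 2) * ∑' n, |φ t n| ^ (2 * σ + 2))
      = ∑' n, |φ t n| ^ (2 * σ + 2) := by
    rw [← mul_assoc, mul_one_div_cancel h2σ.ne', one_mul]
  linarith [mul_le_mul_of_nonneg_left hH h2σ.le, mul_nonneg hσ hK, mul_nonneg hσ hmφ]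

end Energy

theorem dkg_global_nonexistence_general (N : ℕ) (σ m T : ℝ) (hσ : 0 < σ) (hm : 0 < m)
    (φ φ' φ'' : ℝ → ellTwo N) (φ₀ φ₁ : ellTwo N)
    (hd1 : ∀ t ∈ Set.Ico (0:ℝ) T, HasDerivWithinAt φ (φ' t) (Set.Ico (0:ℝ) T) t)
    (hd2 : ∀ t ∈ Set.Ico (0:ℝ) T, HasDerivWithinAt φ' (φ'' t) (Set.Ico (0:ℝ) T) t)
    (heq : ∀ t ∈ Set.Ico (0:ℝ) T,
      φ'' t - discLap (φ t) + m • φ t - Fpow σ hσ.le (φ t) = 0)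
    (hinit0 : φ 0 = φ₀) (hinit1 : φ' 0 = φ₁)
    (hH0 : energyH σ m φ φ' 0 ≤ 0)
    (hip : 0 < ⟪φ₀, φ₁⟫_ℝ) :
    T ≤ ‖φ₀‖ ^ 2 / (σ * ⟪φ₀, φ₁⟫_ℝ) := by
  have hH : ∀ t ∈ Set.Ico 0 T, energyH σ m φ φ' t ≤ 0 := fun t ht =>
    (energyH_eq_of_dkg hσ (convex_Ico 0 T) hd1 hd2 heq ⟨le_rfl, ht.1.trans_lt ht.2⟩ ht).trans_le
      hH0
  have hvirial := fun t ht =>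
    mul_norm_sq_le_inner_of_energyH_nonpos hσ.le hm.le (hH t ht) (heq t ht)
  have hφ₀ : φ₀ ≠ 0 := by rintro rfl; simp at hip
  have := le_div_of_levine_concavity (half_pos hσ) (fun t ht => (hd1 t ht).norm_sq)
    (fun t ht => ((hd1 t ht).inner ℝ (hd2 t ht)).const_mul 2)
    (fun t ht => by
      have := hvirial t ht
      nlinarith [real_inner_self_nonneg (x := φ' t), sq_nonneg ‖φ' t‖])
    (fun t ht => levine_inequality hσ.le (hvirial t ht))
    (by simpa [hinit0] using pow_pos (norm_pos_iff.2 hφ₀) 2) (by simpa [hinit0, hinit1] using hip)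
  simp only [hinit0, hinit1] at this
  convert this using 2
  ring

/-- Global nonexistence for the conservative DKG equation with `H(0) ≤ 0` and
`(φ₀,φ₁)_{ℓ²} > 0`: any solution on `[0,T)` must have
`T ≤ T* = ‖φ₀‖²/(σ (φ₀,φ₁)_{ℓ²})`. -/
theorem dkg_global_nonexistence (N : ℕ) (σ m T : ℝ) (hσ : 0 < σ) (hm : 0 < m)
    (hT : 0 < T) (φ φ' φ'' : ℝ → ellTwo N) (φ₀ φ₁ : ellTwo N)
    (hd1 : ∀ t ∈ Set.Ico (0:ℝ) T, HasDerivWithinAt φ (φ' t) (Set.Ico (0:ℝ) T) t)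
    (hd2 : ∀ t ∈ Set.Ico (0:ℝ) T, HasDerivWithinAt φ' (φ'' t) (Set.Ico (0:ℝ) T) t)
    (hcont : ContinuousOn φ'' (Set.Ico (0:ℝ) T))
    (heq : ∀ t ∈ Set.Ico (0:ℝ) T,
      φ'' t - discLap (φ t) + m • φ t - Fpow σ hσ.le (φ t) = 0)
    (hinit0 : φ 0 = φ₀) (hinit1 : φ' 0 = φ₁)
    (hH0 : energyH σ m φ φ' 0 ≤ 0)
    (hip : 0 < ⟪φ₀, φ₁⟫_ℝ) :
    T ≤ ‖φ₀‖ ^ 2 / (σ * ⟪φ₀, φ₁⟫_ℝ) :=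
  dkg_global_nonexistence_general N σ m T hσ hm φ φ' φ'' φ₀ φ₁ hd1 hd2 heq hinit0 hinit1 hH0 hip
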